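/- arXiv:2604.13014 — 4 statements merged into one kernel-verified Lean document; each statement's English description precedes it below -/
import Mathlib

section
/- Let d ∈ ℕ with d ≥ 2, let s ∈ (0,1), let Ω ⊂ ℝ^d be a bounded measurable set, and let c₁, c₂ > 0. Let W : (0,∞) × Ω × Ω → ℝ be measurable and nonnegative, satisfying the Gaussian upper bound W_t(x,y) ≤ c₁ t^{−d/2} exp(−‖x−y‖²/(c₂ t)) for all t > 0 and all x, y ∈ Ω. Then there exists a constant K > 0, depending only on Ω, s, d, c₁, c₂, such that for every bounded measurable f : Ω → ℝ and every x ∈ Ω, | (1/Γ(s)) ∫₀^∞ t^{s−1} ( ∫_Ω W_t(x,y) f(y) dy ) dt | ≤ K · sup_{y ∈ Ω} |f(y)|. -/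
open MeasureTheory

open Real Set in
private lemma gauss_integrable' (d : ℕ) {b : ℝ} (hb : 0 < b) :
    Integrable (fun v : EuclideanSpace ℝ (Fin d) => Real.exp (-b * ‖v‖^2)) := by
  have h := (GaussianFourier.integrable_cexp_neg_mul_sq_norm_add
    (V := EuclideanSpace ℝ (Fin d)) (b := (b:ℂ)) (by simpa using hb) 0 0).norm
  refine h.congr (Filter.Eventually.of_forall fun v => ?_)
  simp [Complex.norm_exp]
  left
  norm_cast

open Real Set in
private lemma gauss_integral' (d : ℕ) {b : ℝ} (hb : 0 < b) :
    ∫ v : EuclideanSpace ℝ (Fin d), Real.exp (-b * ‖v‖^2)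
      = (Real.pi / b) ^ ((d : ℝ) / 2) := by
  rw [GaussianFourier.integral_rexp_neg_mul_sq_norm hb]
  simp

private lemma minmax_aux' {P V a b : ℝ} (ha : 0 ≤ a) (hb : 0 ≤ b) :
    min (P * a) (V * b) ≤ max P V * min a b := by
  rcases le_total a b with h | h
  · rw [min_eq_left h]
    exact (min_le_left _ _).trans (mul_le_mul_of_nonneg_right (le_max_left _ _) ha)
  · rw [min_eq_right h]
    exact (min_le_right _ _).trans (mul_le_mul_of_nonneg_right (le_max_right _ _) hb)

/-- `L^∞` stability of the negative fractional power: if the nonnegative, measurable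
kernel `W` satisfies a Gaussian upper bound on a bounded measurable set `Ω ⊆ ℝ^d`
(`d ≥ 2`), then there is a constant `K > 0`, depending only on `Ω, s, d, c₁, c₂`,
such that for every bounded measurable `f` and every `x ∈ Ω`, the heat-semigroup
representation of `L^{-s} f` at `x` is bounded by `K` times the sup of `|f|` on `Ω`. -/
theorem stmt4 (d : ℕ) (hd : 2 ≤ d) (s : ℝ) (hs0 : 0 < s) (hs1 : s < 1)
    (Ω : Set (EuclideanSpace ℝ (Fin d))) (hΩm : MeasurableSet Ω)
    (hΩb : Bornology.IsBounded Ω)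
    (c₁ c₂ : ℝ) (hc₁ : 0 < c₁) (hc₂ : 0 < c₂)
    (W : ℝ → EuclideanSpace ℝ (Fin d) → EuclideanSpace ℝ (Fin d) → ℝ)
    (hWmeas : Measurable
      (fun p : ℝ × EuclideanSpace ℝ (Fin d) × EuclideanSpace ℝ (Fin d) =>
        W p.1 p.2.1 p.2.2))
    (hWnn : ∀ t > (0 : ℝ), ∀ x ∈ Ω, ∀ y ∈ Ω, 0 ≤ W t x y)
    (hWgauss : ∀ t > (0 : ℝ), ∀ x ∈ Ω, ∀ y ∈ Ω,
      W t x y ≤ c₁ * t ^ (-((d : ℝ) / 2)) * Real.exp (-‖x - y‖ ^ 2 / (c₂ * t))) :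
    ∃ K > (0 : ℝ), ∀ f : EuclideanSpace ℝ (Fin d) → ℝ, Measurable f →
      ∀ M : ℝ, (∀ y ∈ Ω, |f y| ≤ M) → ∀ x ∈ Ω,
        |(1 / Real.Gamma s) *
            ∫ t in Set.Ioi (0 : ℝ), t ^ (s - 1) * ∫ y in Ω, W t x y * f y| ≤ K * M := by
  classical
  have hd2 : (1:ℝ) ≤ (d:ℝ)/2 := by
    have : (2:ℝ) ≤ (d:ℝ) := by exact_mod_cast hd
    linarith
  set P : ℝ := (Real.pi * c₂) ^ ((d:ℝ)/2) with hPdef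
  set V : ℝ := (volume Ω).toReal with hVdef
  have hVfin : volume Ω < ⊤ := hΩb.measure_lt_top
  have hV0 : 0 ≤ V := ENNReal.toReal_nonneg
  have hP0 : 0 < P := Real.rpow_pos_of_pos (by positivity) _
  set g : ℝ → ℝ := fun t => min (t ^ (s-1)) (t ^ (s-1-(d:ℝ)/2)) with hgdef
  have hgnn : ∀ t : ℝ, 0 < t → 0 ≤ g t := fun t ht =>
    le_min (Real.rpow_nonneg ht.le _) (Real.rpow_nonneg ht.le _)
  have hgmeas : Measurable g := by fun_prop
  have hgint : IntegrableOn g (Set.Ioi (0:ℝ)) := by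
    have h1 : IntegrableOn g (Set.Ioc 0 1) := by
      have hmaj : IntegrableOn (fun t : ℝ => t ^ (s-1)) (Set.Ioc (0:ℝ) 1) :=
        (intervalIntegral.intervalIntegrable_rpow' (by linarith)).1
      refine hmaj.mono' hgmeas.aestronglyMeasurable.restrict ?_
      filter_upwards [ae_restrict_mem measurableSet_Ioc] with t ht
      rw [Real.norm_eq_abs, abs_of_nonneg (hgnn t ht.1)]
      exact min_le_left _ _
    have h2 : IntegrableOn g (Set.Ioi 1) := by
      have hmaj : IntegrableOn (fun t : ℝ => t ^ (s-1-(d:ℝ)/2)) (Set.Ioi (1:ℝ)) :=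
        integrableOn_Ioi_rpow_of_lt (by linarith) zero_lt_one
      refine hmaj.mono' hgmeas.aestronglyMeasurable.restrict ?_
      filter_upwards [ae_restrict_mem measurableSet_Ioi] with t ht
      rw [Real.norm_eq_abs, abs_of_nonneg (hgnn t (lt_trans zero_lt_one ht))]
      exact min_le_right _ _
    rw [← Set.Ioc_union_Ioi_eq_Ioi (zero_le_one)]
    exact h1.union h2
  set I : ℝ := ∫ t in Set.Ioi (0:ℝ), g t with hIdef
  have hI0 : 0 ≤ I :=
    setIntegral_nonneg measurableSet_Ioi fun t ht => hgnn t ht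
  have hΓ : 0 < Real.Gamma s := Real.Gamma_pos_of_pos hs0
  set C0 : ℝ := c₁ * max P V with hC0def
  have hC00 : 0 < C0 := mul_pos hc₁ (lt_max_of_lt_left hP0)
  refine ⟨1 / Real.Gamma s * C0 * I + 1, ?_, ?_⟩
  · have : 0 ≤ 1 / Real.Gamma s * C0 * I :=
      mul_nonneg (mul_nonneg (by positivity) hC00.le) hI0
    linarith
  intro f hf M hM x hx
  have hM0 : 0 ≤ M := (abs_nonneg _).trans (hM x hx)
  -- pointwise-in-t estimate
  have key : ∀ t ∈ Set.Ioi (0:ℝ),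
      |t ^ (s-1) * ∫ y in Ω, W t x y * f y| ≤ C0 * M * g t := by
    intro t ht
    have ht' : (0:ℝ) < t := ht
    set b : ℝ := (c₂ * t)⁻¹ with hbdef
    have hb : 0 < b := by positivity
    have harg : ∀ X : ℝ, -X/(c₂*t) = -b*X := by
      intro X; rw [hbdef]; field_simp
    have hGint : Integrable (fun y : EuclideanSpace ℝ (Fin d) => Real.exp (-b * ‖x - y‖^2)) := by
      have h2 : (fun y : EuclideanSpace ℝ (Fin d) => Real.exp (-b*‖x-y‖^2))
          = (fun y : EuclideanSpace ℝ (Fin d) => Real.exp (-b*‖y - x‖^2)) := by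
        funext y; rw [norm_sub_rev]
      rw [h2]
      exact (gauss_integrable' d hb).comp_sub_right x
    have hGwhole : ∫ y : EuclideanSpace ℝ (Fin d), Real.exp (-b * ‖x - y‖^2) = P * t ^ ((d:ℝ)/2) := by
      have h2 : (fun y : EuclideanSpace ℝ (Fin d) => Real.exp (-b*‖x-y‖^2))
          = (fun y : EuclideanSpace ℝ (Fin d) => Real.exp (-b*‖y - x‖^2)) := by
        funext y; rw [norm_sub_rev]
      rw [h2, integral_sub_right_eq_self (fun v : EuclideanSpace ℝ (Fin d) => Real.exp (-b*‖v‖^2)) x,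
        gauss_integral' d hb]
      have hpib : Real.pi / b = (Real.pi * c₂) * t := by
        rw [hbdef]; field_simp
      rw [hpib, hPdef, ← Real.mul_rpow (by positivity) ht'.le]
    have hGΩ : ∫ y in Ω, Real.exp (-b * ‖x - y‖^2) ≤ min (P * t ^ ((d:ℝ)/2)) V := by
      refine le_min ?_ ?_
      · rw [← hGwhole]
        exact setIntegral_le_integral hGint
          (Filter.Eventually.of_forall fun y => (Real.exp_pos _).le)
      · calc ∫ y in Ω, Real.exp (-b * ‖x - y‖^2) ≤ ∫ _ in Ω, (1:ℝ) := by
              refine setIntegral_mono_on hGint.integrableOn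
                (integrableOn_const hVfin.ne) hΩm fun y _ => ?_
              exact Real.exp_le_one_iff.2 (by nlinarith [sq_nonneg ‖x - y‖, hb])
          _ = V := by simp [hVdef, Measure.real]
    -- inner spatial bound
    have hinner : |∫ y in Ω, W t x y * f y|
        ≤ (c₁ * t ^ (-((d:ℝ)/2)) * ∫ y in Ω, Real.exp (-b * ‖x - y‖^2)) * M := by
      have h1 : |∫ y in Ω, W t x y * f y| ≤ ∫ y in Ω, |W t x y * f y| := by
        simpa only [Real.norm_eq_abs] using
          norm_integral_le_integral_norm (μ := volume.restrict Ω)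
            (fun y => W t x y * f y)
      refine h1.trans ?_
      have h2 : ∫ y in Ω, |W t x y * f y|
          ≤ ∫ y in Ω, c₁ * t ^ (-((d:ℝ)/2)) * Real.exp (-b * ‖x - y‖^2) * M := by
        refine integral_mono_of_nonneg
          (Filter.Eventually.of_forall fun y => abs_nonneg _)
          (((hGint.integrableOn).const_mul (c₁ * t ^ (-((d:ℝ)/2)))).mul_const M) ?_
        refine (ae_restrict_iff' hΩm).2 (Filter.Eventually.of_forall fun y hy => ?_)
        simp only [abs_mul, abs_of_nonneg (hWnn t ht' x hx y hy)]
        have hWle : W t x y ≤ c₁ * t ^ (-((d:ℝ)/2)) * Real.exp (-b * ‖x - y‖^2) := by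
          have := hWgauss t ht' x hx y hy
          rwa [harg] at this
        exact mul_le_mul hWle (hM y hy) (abs_nonneg _) (by positivity)
      refine h2.trans (le_of_eq ?_)
      rw [integral_mul_const]
      congr 1
      rw [integral_const_mul]
    calc |t ^ (s-1) * ∫ y in Ω, W t x y * f y|
        = t ^ (s-1) * |∫ y in Ω, W t x y * f y| := by
          rw [abs_mul, abs_of_nonneg (Real.rpow_nonneg ht'.le _)]
      _ ≤ t ^ (s-1) * ((c₁ * t ^ (-((d:ℝ)/2)) * ∫ y in Ω, Real.exp (-b * ‖x - y‖^2)) * M) :=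
          mul_le_mul_of_nonneg_left hinner (Real.rpow_nonneg ht'.le _)
      _ ≤ t ^ (s-1) * ((c₁ * t ^ (-((d:ℝ)/2)) * min (P * t ^ ((d:ℝ)/2)) V) * M) := by
          have h0 : (0:ℝ) ≤ c₁ * t ^ (-((d:ℝ)/2)) := by positivity
          gcongr
      _ = c₁ * M * (t ^ (s-1-(d:ℝ)/2) * min (P * t ^ ((d:ℝ)/2)) V) := by
          rw [show t ^ (s-1-(d:ℝ)/2) = t ^ (s-1) * t ^ (-((d:ℝ)/2)) by
            rw [← Real.rpow_add ht']; ring_nf]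
          ring
      _ = c₁ * M * min (P * (t ^ (s-1-(d:ℝ)/2) * t ^ ((d:ℝ)/2))) (V * t ^ (s-1-(d:ℝ)/2)) := by
          rw [mul_min_of_nonneg _ _ (Real.rpow_nonneg ht'.le _)]
          ring_nf
      _ = c₁ * M * min (P * t ^ (s-1)) (V * t ^ (s-1-(d:ℝ)/2)) := by
          rw [← Real.rpow_add ht']; ring_nf
      _ ≤ c₁ * M * (max P V * g t) := by
          refine mul_le_mul_of_nonneg_left ?_ (by positivity)
          exact minmax_aux' (Real.rpow_nonneg ht'.le _) (Real.rpow_nonneg ht'.le _)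
      _ = C0 * M * g t := by rw [hC0def]; ring
  -- integrate the estimate in t
  have habs : |∫ t in Set.Ioi (0:ℝ), t ^ (s-1) * ∫ y in Ω, W t x y * f y|
      ≤ C0 * M * I := by
    have h1 : |∫ t in Set.Ioi (0:ℝ), t ^ (s-1) * ∫ y in Ω, W t x y * f y|
        ≤ ∫ t in Set.Ioi (0:ℝ), |t ^ (s-1) * ∫ y in Ω, W t x y * f y| := by
      simpa only [Real.norm_eq_abs] using
        norm_integral_le_integral_norm (μ := volume.restrict (Set.Ioi (0:ℝ)))
          (fun t => t ^ (s-1) * ∫ y in Ω, W t x y * f y)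
    refine h1.trans ?_
    have h2 : ∫ t in Set.Ioi (0:ℝ), |t ^ (s-1) * ∫ y in Ω, W t x y * f y|
        ≤ ∫ t in Set.Ioi (0:ℝ), C0 * M * g t := by
      refine integral_mono_of_nonneg
        (Filter.Eventually.of_forall fun t => abs_nonneg _)
        (hgint.const_mul (C0 * M)) ?_
      exact (ae_restrict_iff' measurableSet_Ioi).2 (Filter.Eventually.of_forall key)
    refine h2.trans (le_of_eq ?_)
    rw [integral_const_mul]
  calc |(1 / Real.Gamma s) *
        ∫ t in Set.Ioi (0:ℝ), t ^ (s-1) * ∫ y in Ω, W t x y * f y|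
      = (1 / Real.Gamma s) *
        |∫ t in Set.Ioi (0:ℝ), t ^ (s-1) * ∫ y in Ω, W t x y * f y| := by
        rw [abs_mul, abs_of_nonneg (by positivity)]
    _ ≤ (1 / Real.Gamma s) * (C0 * M * I) :=
        mul_le_mul_of_nonneg_left habs (by positivity)
    _ ≤ (1 / Real.Gamma s * C0 * I + 1) * M := by nlinarith
end

section
/- Let (X, μ) be a measure space, and let W : X × X → ℝ be measurable, nonnegative, symmetric (W(x,y) = W(y,x)), and integrable with respect to the product measure μ ⊗ μ. Let ρ : X → ℝ be a bounded measurable function, and let β, H : ℝ → ℝ be monotone nondecreasing functions that are bounded on bounded sets. Then ∫∫ W(x,y) (β(ρ(x)) − β(ρ(y))) · H(ρ(y)) dμ(x) dμ(y) ≤ 0. -/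
open MeasureTheory

/-- Monotonicity estimate for symmetric nonnegative kernels: if `W` is measurable,
nonnegative, symmetric and integrable with respect to `μ ⊗ μ`, `ρ` is bounded and
measurable, and `β, H` are monotone nondecreasing and bounded on bounded sets, then
`∫∫ W(x,y) (β(ρ(x)) - β(ρ(y))) H(ρ(y)) dμ(x) dμ(y) ≤ 0`. -/
theorem stmt8 {X : Type*} [MeasurableSpace X] (μ : Measure X) [SigmaFinite μ]
    (W : X → X → ℝ) (hWm : Measurable fun p : X × X => W p.1 p.2)
    (hWnn : ∀ x y, 0 ≤ W x y) (hWsymm : ∀ x y, W x y = W y x)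
    (hWint : Integrable (fun p : X × X => W p.1 p.2) (μ.prod μ))
    (ρ : X → ℝ) (hρm : Measurable ρ) (hρb : ∃ C, ∀ x, |ρ x| ≤ C)
    (β H : ℝ → ℝ) (hβ : Monotone β) (hH : Monotone H)
    (hβb : ∀ r : ℝ, ∃ M, ∀ t : ℝ, |t| ≤ r → |β t| ≤ M)
    (hHb : ∀ r : ℝ, ∃ M, ∀ t : ℝ, |t| ≤ r → |H t| ≤ M) :
    (∫ y, ∫ x, W x y * (β (ρ x) - β (ρ y)) * H (ρ y) ∂μ ∂μ) ≤ 0 := by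
  obtain ⟨C, hC⟩ := hρb
  obtain ⟨Mβ, hMβ⟩ := hβb C
  obtain ⟨MH, hMH⟩ := hHb C
  set G : X × X → ℝ := fun p => W p.1 p.2 * (β (ρ p.1) - β (ρ p.2)) * H (ρ p.2) with hG
  have hmeas : Measurable G := by
    exact (hWm.mul ((hβ.measurable.comp (hρm.comp measurable_fst)).sub
      (hβ.measurable.comp (hρm.comp measurable_snd)))).mul
      (hH.measurable.comp (hρm.comp measurable_snd))
  have hGint : Integrable G (μ.prod μ) := by
    have : G = fun p : X × X =>
        ((β (ρ p.1) - β (ρ p.2)) * H (ρ p.2)) * W p.1 p.2 := by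
      funext p; ring
    rw [this]
    refine hWint.bdd_mul (c := (Mβ + Mβ) * MH) ?_ (Filter.Eventually.of_forall fun p => ?_)
    · exact (((hβ.measurable.comp (hρm.comp measurable_fst)).sub
        (hβ.measurable.comp (hρm.comp measurable_snd))).mul
        (hH.measurable.comp (hρm.comp measurable_snd))).aestronglyMeasurable
    · have h1 : |β (ρ p.1)| ≤ Mβ := hMβ _ (hC _)
      have h2 : |β (ρ p.2)| ≤ Mβ := hMβ _ (hC _)
      have h3 : |H (ρ p.2)| ≤ MH := hMH _ (hC _)
      calc ‖(β (ρ p.1) - β (ρ p.2)) * H (ρ p.2)‖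
          = |β (ρ p.1) - β (ρ p.2)| * |H (ρ p.2)| := abs_mul _ _
        _ ≤ (Mβ + Mβ) * MH := by
            refine mul_le_mul ?_ h3 (abs_nonneg _) (by linarith [abs_nonneg (β (ρ p.1)), h1])
            calc |β (ρ p.1) - β (ρ p.2)| ≤ |β (ρ p.1)| + |β (ρ p.2)| := abs_sub _ _
              _ ≤ Mβ + Mβ := add_le_add h1 h2
  have hGswapint : Integrable (fun p : X × X => G p.swap) (μ.prod μ) :=
    hGint.swap
  have key : ∫ p, G p ∂(μ.prod μ) = ∫ p, G p.swap ∂(μ.prod μ) := by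
    exact (integral_prod_swap G).symm
  have hsum : ∀ p : X × X, G p + G p.swap ≤ 0 := by
    intro ⟨x, y⟩
    have : G (x, y) + G (x, y).swap
        = -(W x y * ((β (ρ x) - β (ρ y)) * (H (ρ x) - H (ρ y)))) := by
      simp only [hG, Prod.swap]
      rw [hWsymm y x]; ring
    rw [this, neg_nonpos]
    refine mul_nonneg (hWnn x y) ?_
    rcases le_total (ρ x) (ρ y) with h | h
    · nlinarith [hβ h, hH h]
    · exact mul_nonneg (by linarith [hβ h]) (by linarith [hH h])
  have h2 : (2 : ℝ) * ∫ p, G p ∂(μ.prod μ) ≤ 0 := by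
    have := integral_add hGint hGswapint
    have hle : ∫ p, (G p + G p.swap) ∂(μ.prod μ) ≤ 0 :=
      integral_nonpos fun p => hsum p
    rw [this] at hle
    rw [← key] at hle
    linarith
  have hmain : ∫ p, G p ∂(μ.prod μ) ≤ 0 := by linarith
  have : (∫ y, ∫ x, W x y * (β (ρ x) - β (ρ y)) * H (ρ y) ∂μ ∂μ)
      = ∫ p, G p.swap ∂(μ.prod μ) := by
    rw [MeasureTheory.integral_integral (f := fun y x => W x y * (β (ρ x) - β (ρ y)) * H (ρ y)) hGswapint]
    rfl
  rw [this, ← key]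
  exact hmain
end

section
/- Let 0 < δ < 1 < L and define the regularized entropy G_δ^L : ℝ → ℝ by G_δ^L(s) = (s² − δ²)/(2δ) + (log δ − 1)s + 1 for s ≤ δ, G_δ^L(s) = s(log s − 1) + 1 for δ < s < L, and G_δ^L(s) = (s² − L²)/(2L) + (log L − 1)s + 1 for s ≥ L. Then G_δ^L is twice differentiable on ℝ, its first derivative is (G_δ^L)'(s) = s/δ + log δ − 1 for s ≤ δ, log s for δ < s < L, and s/L + log L − 1 for s ≥ L, its second derivative is (G_δ^L)''(s) = 1/δ for s ≤ δ, 1/s for δ < s < L, and 1/L for s ≥ L; consequently β_δ^L(s) · (G_δ^L)''(s) = 1 for all s ∈ ℝ, (G_δ^L)''(s) ≥ 1/L for all s ∈ ℝ, and G_δ^L is strictly convex. -/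
/-- The regularized entropy `G_δ^L`. -/
noncomputable def Gdl (δ L s : ℝ) : ℝ :=
  if s ≤ δ then (s ^ 2 - δ ^ 2) / (2 * δ) + (Real.log δ - 1) * s + 1
  else if s < L then s * (Real.log s - 1) + 1
  else (s ^ 2 - L ^ 2) / (2 * L) + (Real.log L - 1) * s + 1

/-- The first derivative of the regularized entropy `G_δ^L`. -/
noncomputable def Gdl' (δ L s : ℝ) : ℝ :=
  if s ≤ δ then s / δ + Real.log δ - 1
  else if s < L then Real.log s
  else s / L + Real.log L - 1

/-- The second derivative of the regularized entropy `G_δ^L`. -/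
noncomputable def Gdl'' (δ L s : ℝ) : ℝ :=
  if s ≤ δ then 1 / δ
  else if s < L then 1 / s
  else 1 / L

/-- The cut-off function `β_δ^L`. -/
noncomputable def betadl (δ L s : ℝ) : ℝ :=
  if s ≤ δ then δ
  else if s < L then s
  else L

section aux

open Real Set

lemma hf1 {a : ℝ} (ha : a ≠ 0) (s : ℝ) :
    HasDerivAt (fun s : ℝ => (s ^ 2 - a ^ 2) / (2 * a) + (Real.log a - 1) * s + 1)
      (s / a + Real.log a - 1) s := by
  have h : HasDerivAt (fun s : ℝ => (s ^ 2 - a ^ 2) / (2 * a) + (Real.log a - 1) * s + 1)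
      ((2 * s ^ 1) / (2 * a) + (Real.log a - 1) * 1) s := by
    exact ((((hasDerivAt_pow 2 s).sub_const (a ^ 2)).div_const (2 * a)).add
      ((hasDerivAt_id s).const_mul (Real.log a - 1))).add_const 1
  convert h using 1
  field_simp
  ring

lemma hf2 {s : ℝ} (hs : 0 < s) :
    HasDerivAt (fun s : ℝ => s * (Real.log s - 1) + 1) (Real.log s) s := by
  have h : HasDerivAt (fun s : ℝ => s * (Real.log s - 1) + 1)
      (1 * (Real.log s - 1) + s * s⁻¹) s :=
    ((hasDerivAt_id s).mul ((Real.hasDerivAt_log hs.ne').sub_const 1)).add_const 1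
  convert h using 1
  field_simp
  ring

lemma hg1 {a : ℝ} (s : ℝ) :
    HasDerivAt (fun s : ℝ => s / a + Real.log a - 1) (1 / a) s := by
  have h : HasDerivAt (fun s : ℝ => s / a + Real.log a - 1) (1 / a + 0) s := by
    have : HasDerivAt (fun s : ℝ => s / a) (1 / a) s := by
      simpa using (hasDerivAt_id s).div_const a
    simpa using (this.add_const (Real.log a)).sub_const 1
  simpa using h

end aux

/-- For `0 < δ < 1 < L`, the regularized entropy `G_δ^L` is twice differentiable with
the stated first and second derivatives; consequently `β_δ^L ⋅ (G_δ^L)'' = 1`,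
`(G_δ^L)'' ≥ 1/L` everywhere, and `G_δ^L` is strictly convex. -/
theorem stmt11 (δ L : ℝ) (hδ0 : 0 < δ) (hδ1 : δ < 1) (hL : 1 < L) :
    (∀ s : ℝ, HasDerivAt (Gdl δ L) (Gdl' δ L s) s) ∧
    (∀ s : ℝ, HasDerivAt (Gdl' δ L) (Gdl'' δ L s) s) ∧
    (∀ s : ℝ, betadl δ L s * Gdl'' δ L s = 1) ∧
    (∀ s : ℝ, 1 / L ≤ Gdl'' δ L s) ∧
    StrictConvexOn ℝ Set.univ (Gdl δ L) := by
  have hδL : δ < L := hδ1.trans hL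
  have hL0 : (0 : ℝ) < L := lt_trans one_pos hL
  have h1 : ∀ s : ℝ, HasDerivAt (Gdl δ L) (Gdl' δ L s) s := by
    intro s
    rcases lt_trichotomy s δ with hs | hs | hs
    · have h : HasDerivAt (Gdl δ L) (s / δ + Real.log δ - 1) s := by
        refine (hf1 hδ0.ne' s).congr_of_eventuallyEq ?_
        filter_upwards [Iio_mem_nhds hs] with x hx
        simp [Gdl, le_of_lt (Set.mem_Iio.mp hx)]
      simpa [Gdl', hs.le] using h
    · rw [hs]
      have hleft : HasDerivWithinAt (Gdl δ L) (Real.log δ) (Set.Iic δ) δ := by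
        have h := (hf1 hδ0.ne' δ).hasDerivWithinAt (s := Set.Iic δ)
        have h' : HasDerivWithinAt (Gdl δ L)
            (δ / δ + Real.log δ - 1) (Set.Iic δ) δ :=
          h.congr (fun x hx => by simp [Gdl, Set.mem_Iic.mp hx]) (by simp [Gdl])
        have : δ / δ + Real.log δ - 1 = Real.log δ := by field_simp; ring
        rwa [this] at h'
      have hright : HasDerivWithinAt (Gdl δ L) (Real.log δ) (Set.Ici δ) δ := by
        have h := (hf2 hδ0).hasDerivWithinAt (s := Set.Ici δ)
        refine h.congr_of_eventuallyEq ?_ ?_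
        · filter_upwards [eventually_nhdsWithin_of_eventually_nhds (Iio_mem_nhds hδL),
            self_mem_nhdsWithin] with x hxL hxδ
          rcases eq_or_lt_of_le (Set.mem_Ici.mp hxδ) with h | h
          · subst h
            simp [Gdl]
            ring
          · simp [Gdl, not_le.mpr h, hxL]
        · simp [Gdl]
          ring
      have := (hleft.union hright)
      rw [Set.Iic_union_Ici, hasDerivWithinAt_univ] at this
      have hval : Gdl' δ L δ = Real.log δ := by
        simp [Gdl']
        field_simp
        ring
      rwa [hval]
    · rcases lt_trichotomy s L with hsL | hsL | hsL
      · have h : HasDerivAt (Gdl δ L) (Real.log s) s := by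
          refine (hf2 (hδ0.trans hs)).congr_of_eventuallyEq ?_
          filter_upwards [Ioo_mem_nhds hs hsL] with x hx
          simp [Gdl, not_le.mpr hx.1, hx.2]
        simpa [Gdl', not_le.mpr hs, hsL] using h
      · rw [hsL]
        have hleft : HasDerivWithinAt (Gdl δ L) (Real.log L) (Set.Iic L) L := by
          have h := (hf2 hL0).hasDerivWithinAt (s := Set.Iic L)
          refine h.congr_of_eventuallyEq ?_ ?_
          · filter_upwards [eventually_nhdsWithin_of_eventually_nhds (Ioi_mem_nhds hδL),
              self_mem_nhdsWithin] with x hxδ hxL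
            rcases eq_or_lt_of_le (Set.mem_Iic.mp hxL) with h | h
            · subst h
              simp [Gdl, not_le.mpr hδL]
              ring
            · simp [Gdl, not_le.mpr hxδ, h]
          · simp [Gdl, not_le.mpr hδL]
            ring
        have hright : HasDerivWithinAt (Gdl δ L) (Real.log L) (Set.Ici L) L := by
          have h := (hf1 hL0.ne' L).hasDerivWithinAt (s := Set.Ici L)
          have h' : HasDerivWithinAt (Gdl δ L)
              (L / L + Real.log L - 1) (Set.Ici L) L :=
            h.congr (fun x hx => by
              simp [Gdl, not_le.mpr (lt_of_lt_of_le hδL (Set.mem_Ici.mp hx)), not_lt.mpr (Set.mem_Ici.mp hx)])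
              (by simp [Gdl, not_le.mpr hδL])
          have : L / L + Real.log L - 1 = Real.log L := by field_simp; ring
          rwa [this] at h'
        have := (hleft.union hright)
        rw [Set.Iic_union_Ici, hasDerivWithinAt_univ] at this
        have hval : Gdl' δ L L = Real.log L := by
          simp [Gdl', not_le.mpr hδL]
          field_simp
          ring
        rwa [hval]
      · have h : HasDerivAt (Gdl δ L) (s / L + Real.log L - 1) s := by
          refine (hf1 hL0.ne' s).congr_of_eventuallyEq ?_
          filter_upwards [Ioi_mem_nhds hsL] with x hx
          simp [Gdl, not_le.mpr ((hδL.trans hx) : δ < x), not_lt.mpr (le_of_lt (Set.mem_Ioi.mp hx))]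
        simpa [Gdl', not_le.mpr hs, not_lt.mpr hsL.le] using h
  have h2 : ∀ s : ℝ, HasDerivAt (Gdl' δ L) (Gdl'' δ L s) s := by
    intro s
    rcases lt_trichotomy s δ with hs | hs | hs
    · have h : HasDerivAt (Gdl' δ L) (1 / δ) s := by
        refine (hg1 (a := δ) s).congr_of_eventuallyEq ?_
        filter_upwards [Iio_mem_nhds hs] with x hx
        simp [Gdl', le_of_lt (Set.mem_Iio.mp hx)]
      simpa [Gdl'', hs.le] using h
    · rw [hs]
      have hleft : HasDerivWithinAt (Gdl' δ L) (1 / δ) (Set.Iic δ) δ :=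
        ((hg1 (a := δ) δ).hasDerivWithinAt (s := Set.Iic δ)).congr
          (fun x hx => by simp [Gdl', Set.mem_Iic.mp hx]) (by simp [Gdl'])
      have hright : HasDerivWithinAt (Gdl' δ L) (1 / δ) (Set.Ici δ) δ := by
        have h := ((Real.hasDerivAt_log hδ0.ne').hasDerivWithinAt (s := Set.Ici δ))
        rw [← one_div] at h
        refine h.congr_of_eventuallyEq ?_ ?_
        · filter_upwards [eventually_nhdsWithin_of_eventually_nhds (Iio_mem_nhds hδL),
            self_mem_nhdsWithin] with x hxL hxδ
          rcases eq_or_lt_of_le (Set.mem_Ici.mp hxδ) with h | h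
          · subst h
            simp [Gdl']
            field_simp
            ring
          · simp [Gdl', not_le.mpr h, hxL]
        · simp [Gdl']
          field_simp
          ring
      have := (hleft.union hright)
      rw [Set.Iic_union_Ici, hasDerivWithinAt_univ] at this
      simpa [Gdl''] using this
    · rcases lt_trichotomy s L with hsL | hsL | hsL
      · have h : HasDerivAt (Gdl' δ L) s⁻¹ s := by
          refine ((Real.hasDerivAt_log (hδ0.trans hs).ne')).congr_of_eventuallyEq ?_
          filter_upwards [Ioo_mem_nhds hs hsL] with x hx
          simp [Gdl', not_le.mpr hx.1, hx.2]
        rw [← one_div] at h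
        simpa [Gdl'', not_le.mpr hs, hsL] using h
      · rw [hsL]
        have hleft : HasDerivWithinAt (Gdl' δ L) (1 / L) (Set.Iic L) L := by
          have h := ((Real.hasDerivAt_log hL0.ne').hasDerivWithinAt (s := Set.Iic L))
          rw [← one_div] at h
          refine h.congr_of_eventuallyEq ?_ ?_
          · filter_upwards [eventually_nhdsWithin_of_eventually_nhds (Ioi_mem_nhds hδL),
              self_mem_nhdsWithin] with x hxδ hxL
            rcases eq_or_lt_of_le (Set.mem_Iic.mp hxL) with h | h
            · subst h
              simp [Gdl', not_le.mpr hδL]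
              field_simp
              ring
            · simp [Gdl', not_le.mpr hxδ, h]
          · simp [Gdl', not_le.mpr hδL]
            field_simp
            ring
        have hright : HasDerivWithinAt (Gdl' δ L) (1 / L) (Set.Ici L) L :=
          ((hg1 (a := L) L).hasDerivWithinAt (s := Set.Ici L)).congr
            (fun x hx => by
              simp [Gdl', not_le.mpr (lt_of_lt_of_le hδL (Set.mem_Ici.mp hx)), not_lt.mpr (Set.mem_Ici.mp hx)])
            (by simp [Gdl', not_le.mpr hδL])
        have := (hleft.union hright)
        rw [Set.Iic_union_Ici, hasDerivWithinAt_univ] at this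
        simpa [Gdl'', not_le.mpr hδL] using this
      · have h : HasDerivAt (Gdl' δ L) (1 / L) s := by
          refine (hg1 (a := L) s).congr_of_eventuallyEq ?_
          filter_upwards [Ioi_mem_nhds hsL] with x hx
          simp [Gdl', not_le.mpr ((hδL.trans hx) : δ < x), not_lt.mpr (le_of_lt (Set.mem_Ioi.mp hx))]
        simpa [Gdl'', not_le.mpr hs, not_lt.mpr hsL.le] using h
  have h3 : ∀ s : ℝ, betadl δ L s * Gdl'' δ L s = 1 := by
    intro s
    by_cases hs : s ≤ δ
    · simp [betadl, Gdl'', hs]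
      field_simp
    · by_cases hsL : s < L
      · have hs0 : s ≠ 0 := (hδ0.trans (not_le.mp hs)).ne'
        simp [betadl, Gdl'', hs, hsL]
        field_simp
      · simp [betadl, Gdl'', hs, hsL]
        field_simp
  have h4 : ∀ s : ℝ, 1 / L ≤ Gdl'' δ L s := by
    intro s
    by_cases hs : s ≤ δ
    · simp only [Gdl'', if_pos hs]
      exact one_div_le_one_div_of_le hδ0 hδL.le
    · by_cases hsL : s < L
      · simp only [Gdl'', if_neg hs, if_pos hsL]
        exact one_div_le_one_div_of_le (hδ0.trans (not_le.mp hs)) hsL.le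
      · simp [Gdl'', hs, hsL]
  refine ⟨h1, h2, h3, h4, ?_⟩
  have hpos : ∀ x : ℝ, 0 < deriv (Gdl' δ L) x := by
    intro x
    rw [(h2 x).deriv]
    exact lt_of_lt_of_le (by positivity) (h4 x)
  have hmono : StrictMono (Gdl' δ L) := strictMono_of_deriv_pos hpos
  refine StrictMonoOn.strictConvexOn_of_deriv convex_univ ?_ ?_
  · exact fun x _ => (h1 x).continuousAt.continuousWithinAt
  · intro x _ y _ hxy
    rw [(h1 x).deriv, (h1 y).deriv]
    exact hmono hxy
end

section
/- Let 0 < δ < 1 < L and let G_δ^L : ℝ → ℝ be defined by G_δ^L(s) = (s² − δ²)/(2δ) + (log δ − 1)s + 1 for s ≤ δ, G_δ^L(s) = s(log s − 1) + 1 for δ < s < L, and G_δ^L(s) = (s² − L²)/(2L) + (log L − 1)s + 1 for s ≥ L, with derivative (G_δ^L)'(s) = s/δ + log δ − 1 for s ≤ δ, log s for δ < s < L, and s/L + log L − 1 for s ≥ L. Then: (i) for every s ≤ 0, min{ G_δ^L(s), s · (G_δ^L)'(s) } ≥ s²/(2δ); and (ii) there exists a constant C > 0, depending only on L (and not on δ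 or s), such that for every s ≥ 0, min{ G_δ^L(s), s · (G_δ^L)'(s) } ≥ s²/(4L) − C. -/
/-!
On `s ≤ δ` the function `G_δ^L` is the quadratic continuation of the entropy, and
`G_δ^L(s) = (s - δ)² / (2δ) + (s - δ) log δ + G(δ)` with every term nonnegative when `δ ≤ 1`.
Hence `G_δ^L ≥ 0` and `s (G_δ^L)'(s) ≥ -1` on all of `(-∞, L)`, which gives (ii) there since
`s² / (4L) ≤ L / 4`. For `s ≥ L` both quantities are at least `s² / (2L) - s`, and completing the
square, `s² / (2L) - s ≥ s² / (4L) - L`. For (i), when `s ≤ 0` the linear term `(log δ - 1) s` is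
nonnegative.
-/

open Real

section

variable {δ L s : ℝ}

lemma Gdl_of_le (h : s ≤ δ) :
    Gdl δ L s = (s ^ 2 - δ ^ 2) / (2 * δ) + (log δ - 1) * s + 1 :=
  if_pos h

lemma Gdl_of_lt_of_lt (hδ : δ < s) (hL : s < L) : Gdl δ L s = s * (log s - 1) + 1 := by
  rw [Gdl, if_neg hδ.not_ge, if_pos hL]

lemma Gdl_of_ge (hδL : δ < L) (hL : L ≤ s) :
    Gdl δ L s = (s ^ 2 - L ^ 2) / (2 * L) + (log L - 1) * s + 1 := by
  rw [Gdl, if_neg (hδL.trans_le hL).not_ge, if_neg hL.not_gt]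

lemma Gdl'_of_le (h : s ≤ δ) : Gdl' δ L s = s / δ + log δ - 1 :=
  if_pos h

lemma Gdl'_of_lt_of_lt (hδ : δ < s) (hL : s < L) : Gdl' δ L s = log s := by
  rw [Gdl', if_neg hδ.not_ge, if_pos hL]

lemma Gdl'_of_ge (hδL : δ < L) (hL : L ≤ s) : Gdl' δ L s = s / L + log L - 1 := by
  rw [Gdl', if_neg (hδL.trans_le hL).not_ge, if_neg hL.not_gt]

lemma sq_div_le_Gdl_of_nonpos (hδ : 0 < δ) (hδ1 : δ ≤ 1) (hs : s ≤ 0) :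
    s ^ 2 / (2 * δ) ≤ Gdl δ L s := by
  have hlin : 0 ≤ (log δ - 1) * s :=
    mul_nonneg_of_nonpos_of_nonpos (by linarith [log_nonpos hδ.le hδ1]) hs
  have hsplit : (s ^ 2 - δ ^ 2) / (2 * δ) = s ^ 2 / (2 * δ) - δ / 2 := by
    field_simp
  rw [Gdl_of_le (hs.trans hδ.le), hsplit]
  linarith

lemma sq_div_le_mul_Gdl'_of_nonpos (hδ : 0 < δ) (hδ1 : δ ≤ 1) (hs : s ≤ 0) :
    s ^ 2 / (2 * δ) ≤ s * Gdl' δ L s := by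
  have hlin : 0 ≤ (log δ - 1) * s :=
    mul_nonneg_of_nonpos_of_nonpos (by linarith [log_nonpos hδ.le hδ1]) hs
  have hsplit : s * (s / δ + log δ - 1) = s ^ 2 / (2 * δ) + s ^ 2 / (2 * δ) + (log δ - 1) * s := by
    field_simp
    ring
  have hquad : 0 ≤ s ^ 2 / (2 * δ) := by positivity
  rw [Gdl'_of_le (hs.trans hδ.le), hsplit]
  linarith

lemma Gdl_nonneg_of_lt (hδ : 0 < δ) (hδ1 : δ ≤ 1) (hs : s < L) : 0 ≤ Gdl δ L s := by
  rcases le_or_gt s δ with hsδ | hδs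
  · have hsplit : Gdl δ L s =
        (s - δ) ^ 2 / (2 * δ) + (s - δ) * log δ + (δ * log δ - δ + 1) := by
      rw [Gdl_of_le hsδ]
      field_simp
      ring
    have hquad : 0 ≤ (s - δ) ^ 2 / (2 * δ) := by positivity
    have hlin : 0 ≤ (s - δ) * log δ :=
      mul_nonneg_of_nonpos_of_nonpos (by linarith) (log_nonpos hδ.le hδ1)
    have hent := self_sub_one_le_mul_log hδ.le
    rw [hsplit]
    linarith
  · rw [Gdl_of_lt_of_lt hδs hs]
    linarith [self_sub_one_le_mul_log (hδ.trans hδs).le]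

lemma neg_one_le_mul_Gdl'_of_lt (hδ : 0 < δ) (hδ1 : δ ≤ 1) (hs : s < L) :
    -1 ≤ s * Gdl' δ L s := by
  rcases le_or_gt s δ with hsδ | hδs
  · have hsplit : s * Gdl' δ L s =
        (s ^ 2 - s * δ + δ ^ 2) / δ + (s - δ) * log δ + (δ * log δ - δ) := by
      rw [Gdl'_of_le hsδ]
      field_simp
      ring
    have hquad : 0 ≤ (s ^ 2 - s * δ + δ ^ 2) / δ :=
      div_nonneg (by nlinarith [sq_nonneg (s - δ)]) hδ.le
    have hlin : 0 ≤ (s - δ) * log δ :=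
      mul_nonneg_of_nonpos_of_nonpos (by linarith) (log_nonpos hδ.le hδ1)
    have hent := self_sub_one_le_mul_log hδ.le
    rw [hsplit]
    linarith
  · rw [Gdl'_of_lt_of_lt hδs hs]
    linarith [self_sub_one_le_mul_log (hδ.trans hδs).le]

lemma sq_div_four_mul_sub_le (hL : 0 < L) (s : ℝ) :
    s ^ 2 / (4 * L) - L ≤ s ^ 2 / (2 * L) - s := by
  have hsq : s ^ 2 / (2 * L) - s - (s ^ 2 / (4 * L) - L) = (s - 2 * L) ^ 2 / (4 * L) := by
    field_simp
    ring
  have : 0 ≤ (s - 2 * L) ^ 2 / (4 * L) := by positivity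
  linarith

lemma sq_div_sub_le_Gdl_of_ge (hL1 : 1 ≤ L) (hδL : δ < L) (hs : L ≤ s) :
    s ^ 2 / (4 * L) - 2 * L ≤ Gdl δ L s := by
  have hL : 0 < L := by linarith
  have hsplit : (s ^ 2 - L ^ 2) / (2 * L) = s ^ 2 / (2 * L) - L / 2 := by
    field_simp
  have hlin : 0 ≤ log L * s := mul_nonneg (log_nonneg hL1) (by linarith)
  rw [Gdl_of_ge hδL hs, hsplit]
  linarith [sq_div_four_mul_sub_le hL s]

lemma sq_div_sub_le_mul_Gdl'_of_ge (hL1 : 1 ≤ L) (hδL : δ < L) (hs : L ≤ s) :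
    s ^ 2 / (4 * L) - 2 * L ≤ s * Gdl' δ L s := by
  have hL : 0 < L := by linarith
  have hsplit : s * (s / L + log L - 1) = s ^ 2 / (2 * L) + s ^ 2 / (2 * L) + log L * s - s := by
    field_simp
    ring
  have hquad : 0 ≤ s ^ 2 / (2 * L) := by positivity
  have hlin : 0 ≤ log L * s := mul_nonneg (log_nonneg hL1) (by linarith)
  rw [Gdl'_of_ge hδL hs, hsplit]
  linarith [sq_div_four_mul_sub_le hL s]

end

/-- Coercivity of the regularized entropy: for `0 < δ < 1 < L`,
(i) `min {G_δ^L(s), s (G_δ^L)'(s)} ≥ s²/(2δ)` for all `s ≤ 0`; and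
(ii) there is a constant `C > 0` depending only on `L` (not on `δ` or `s`) with
`min {G_δ^L(s), s (G_δ^L)'(s)} ≥ s²/(4L) - C` for all `s ≥ 0`. -/
theorem stmt12 (L : ℝ) (hL : 1 < L) :
    (∀ δ : ℝ, 0 < δ → δ < 1 → ∀ s ≤ (0 : ℝ),
      s ^ 2 / (2 * δ) ≤ min (Gdl δ L s) (s * Gdl' δ L s)) ∧
    (∃ C > (0 : ℝ), ∀ δ : ℝ, 0 < δ → δ < 1 → ∀ s ≥ (0 : ℝ),
      s ^ 2 / (4 * L) - C ≤ min (Gdl δ L s) (s * Gdl' δ L s)) := by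
  refine ⟨fun δ hδ hδ1 s hs => le_min (sq_div_le_Gdl_of_nonpos hδ hδ1.le hs)
    (sq_div_le_mul_Gdl'_of_nonpos hδ hδ1.le hs), 2 * L, by linarith, ?_⟩
  intro δ hδ hδ1 s hs
  have hδL : δ < L := hδ1.trans hL
  rcases lt_or_ge s L with hsL | hLs
  · have hsmall : s ^ 2 / (4 * L) ≤ L / 4 := by
      rw [div_le_div_iff₀ (by linarith) (by norm_num)]
      nlinarith
    exact le_min (by linarith [Gdl_nonneg_of_lt hδ hδ1.le hsL])
      (by linarith [neg_one_le_mul_Gdl'_of_lt hδ hδ1.le hsL])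
  · exact le_min (sq_div_sub_le_Gdl_of_ge hL.le hδL hLs)
      (sq_div_sub_le_mul_Gdl'_of_ge hL.le hδL hLs)
end
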